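/- Let π be a permutation and let π_i and π_j (at positions i < j) be two elements of π, neither of which is a left-to-right minimum of π. Let π' be the permutation obtained from π by placing max(π_i, π_j) at position i, deleting the element at position j, and renumbering the remaining elements preserving relative order. Then π ≡ π' under the bidirectional replacement 123 ↔ 13★. -/

import Mathlib

/-!
Pattern-replacement equivalences between permutations of different lengths
(arXiv:1309.4802). A ★-pattern is encoded as a `List (Option ℕ)`, where `none`
is the placeholder ★ and `some k` an integer entry.
-/

/-- A ★-pattern / star-string entry: `none` is ★, `some k` an integer `k`. -/
abbrev SPat := List (Option ℕ)

/-- The integer entries of a star-string, in order. -/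
def ints (ρ : SPat) : List ℕ := ρ.filterMap id

/-- Two lists of naturals are order-isomorphic. -/
def OrdIso (u v : List ℕ) : Prop :=
  u.length = v.length ∧
  ∀ i j, i < u.length → j < u.length → (u.getD i 0 < u.getD j 0 ↔ v.getD i 0 < v.getD j 0)

/-- A valid string of distinct positive integers and ★'s. -/
def StarStr (ρ : SPat) : Prop := (ints ρ).Nodup ∧ ∀ k ∈ ints ρ, 0 < k

/-- `r` (entry by entry) forms a copy of the ★-pattern `δ`: ★'s in the same
positions, and the integer entries order-isomorphic. -/
def IsCopy (r δ : SPat) : Prop :=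
  r.length = δ.length ∧
  (∀ i, (r.getD i none = none ↔ δ.getD i none = none)) ∧
  OrdIso (ints r) (ints δ)

/-- `Repl a b ρ₁ ρ₂` : `ρ₂` is obtained from `ρ₁` by replacing an occurrence of `a`
as a (not necessarily contiguous) substring of `ρ₁` by `b`, entry by entry at the
same positions. -/
inductive Repl : SPat → SPat → SPat → SPat → Prop
  | nil : Repl [] [] [] []
  | keep {a b ρ₁ ρ₂} (x : Option ℕ) : Repl a b ρ₁ ρ₂ → Repl a b (x :: ρ₁) (x :: ρ₂)
  | repl {a b ρ₁ ρ₂} (x y : Option ℕ) :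
      Repl a b ρ₁ ρ₂ → Repl (x :: a) (y :: b) (x :: ρ₁) (y :: ρ₂)

/-- `π` is a permutation of `1, …, n` (as a list). -/
def IsPermList (π : List ℕ) : Prop := π.Perm (List.range' 1 π.length)

/-- `σ` is a result of the replacement `α → β` applied to the permutation `π`:
(1) `ρ₁` is `π` renumbered (order-isomorphically) with ★'s inserted anywhere;
(2) a substring `a` of `ρ₁` forming a copy of `α` is replaced (in place) by a
string `b` that is a copy of `β`, whose integers meet `ρ₁` only inside `a`, and
which agrees with `a` on the integer entries common to `α` and `β`;
(3) dropping ★'s and renumbering gives the permutation `σ`. -/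
def IsResult (α β : SPat) (π σ : List ℕ) : Prop :=
  ∃ ρ₁ ρ₂ a b : SPat,
    StarStr ρ₁ ∧ OrdIso π (ints ρ₁) ∧
    IsCopy a α ∧
    StarStr b ∧ IsCopy b β ∧
    (∀ k ∈ ints b, k ∈ ints ρ₁ → k ∈ ints a) ∧
    (∀ i j x, α.getD i none = some x → β.getD j none = some x →
      a.getD i none = b.getD j none) ∧
    Repl a b ρ₁ ρ₂ ∧
    IsPermList σ ∧ OrdIso (ints ρ₂) σ

/-- Equivalence under the bidirectional replacement `α ↔ β`: a finite sequence
of `α → β` and `β → α` replacements. -/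
def PermEquiv (α β : SPat) (π σ : List ℕ) : Prop :=
  Relation.ReflTransGen (fun τ υ => IsResult α β τ υ ∨ IsResult β α τ υ) π σ

/-- `π` is isolated under `α ↔ β`: no other permutation is equivalent to it. -/
def Isolated (α β : SPat) (π : List ℕ) : Prop :=
  ∀ σ : List ℕ, IsPermList σ → PermEquiv α β π σ → σ = π

/-- The identity permutation `1 2 ⋯ n`. -/
def idPerm (n : ℕ) : List ℕ := List.range' 1 n

/-- The reverse identity permutation `n (n-1) ⋯ 1`. -/
def ridPerm (n : ℕ) : List ℕ := (List.range' 1 n).reverse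

def pat123 : SPat := [some 1, some 2, some 3]
def pat132 : SPat := [some 1, some 3, some 2]
def patS32 : SPat := [none, some 3, some 2]
def pat3S2 : SPat := [some 3, none, some 2]
def pat32S : SPat := [some 3, some 2, none]
def patS31 : SPat := [none, some 3, some 1]
def pat3S1 : SPat := [some 3, none, some 1]
def pat31S : SPat := [some 3, some 1, none]
def patS21 : SPat := [none, some 2, some 1]
def pat2S1 : SPat := [some 2, none, some 1]
def pat21S : SPat := [some 2, some 1, none]
def pat12S : SPat := [some 1, some 2, none]
def pat1S3 : SPat := [some 1, none, some 3]
def patS23 : SPat := [none, some 2, some 3]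
def patS12 : SPat := [none, some 1, some 2]
def pat23S : SPat := [some 2, some 3, none]
def pat13S : SPat := [some 1, some 3, none]
def pat1S2 : SPat := [some 1, none, some 2]

/-- The entry at (0-indexed) position `i` of `π` is a left-to-right minimum. -/
def IsLRMin (π : List ℕ) (i : ℕ) : Prop := ∀ j < i, π.getD i 0 < π.getD j 0

instance (π : List ℕ) (i : ℕ) : Decidable (IsLRMin π i) := by
  unfold IsLRMin; infer_instance

/-- The number of left-to-right minima of `π`. -/
def numLRMin (π : List ℕ) : ℕ :=
  ((List.range π.length).filter fun i => decide (IsLRMin π i)).length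

/-- `π` has at least one element that is not a left-to-right minimum. -/
def HasNonMin (π : List ℕ) : Prop := ∃ i < π.length, ¬ IsLRMin π i

/-- The 0-indexed position of the leftmost non-left-to-right-minimum, if any. -/
def leftNonMin (π : List ℕ) : Option ℕ :=
  (List.range π.length).find? fun i => ! decide (IsLRMin π i)

/-- The 0-indexed position of the rightmost non-left-to-right-minimum, if any. -/
def rightNonMin (π : List ℕ) : Option ℕ :=
  (List.range π.length).reverse.find? fun i => ! decide (IsLRMin π i)

/-- The values of the non-left-to-right-minimum entries of `π`. -/
def nonMinVals (π : List ℕ) : List ℕ :=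
  ((List.range π.length).filter fun i => ! decide (IsLRMin π i)).map fun i => π.getD i 0

/-- The largest non-left-to-right-minimum value of `π`. -/
def maxNonMin (π : List ℕ) : ℕ := (nonMinVals π).foldr max 0

/-- The smallest non-left-to-right-minimum value of `π`. -/
def minNonMin (π : List ℕ) : ℕ := (nonMinVals π).foldr min π.length

/-- The number of left-to-right minima of `π` whose value is less than the
value of the largest non-left-to-right-minimum element. -/
def vStatMax (π : List ℕ) : ℕ :=
  ((List.range π.length).filter fun i =>
    decide (IsLRMin π i) && decide (π.getD i 0 < maxNonMin π)).length

/-- The number of left-to-right minima of `π` whose value is less than the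
value of the smallest non-left-to-right-minimum element. -/
def vStatMin (π : List ℕ) : ℕ :=
  ((List.range π.length).filter fun i =>
    decide (IsLRMin π i) && decide (π.getD i 0 < minNonMin π)).length

/-- Renumber a list of distinct naturals, preserving relative order, into a
permutation of `1, …, n`. -/
def renumber (l : List ℕ) : List ℕ := l.map fun x => (l.filter fun y => y ≤ x).length

/-! If `π_i < π_j`, one replacement `123 → 13★` on (a smaller entry left of `π_i`, `π_i`, `π_j`)
moves `π_j` to position `i` and deletes position `j`. If `π_j < π_i`, three replacements are used:
`13★ → 123` pushes `π_i` to just after `π_j` and leaves a fresh value slightly below `π_i` at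
position `i`; `123 → 13★` on (a smaller entry left of `π_j`, `π_j`, `π_i`) deletes `π_j`; and
`123 → 13★` on (a smaller entry left of `π_i`, the fresh value, `π_i`) moves `π_i` back to
position `i`. -/

@[simp] lemma ints_nil : ints [] = [] := rfl

@[simp] lemma ints_append (ρ ρ' : SPat) : ints (ρ ++ ρ') = ints ρ ++ ints ρ' :=
  List.filterMap_append

@[simp] lemma ints_cons_some (k : ℕ) (ρ : SPat) : ints (some k :: ρ) = k :: ints ρ := rfl

@[simp] lemma ints_cons_none (ρ : SPat) : ints (none :: ρ) = ints ρ := rfl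

@[simp] lemma ints_map_some (l : List ℕ) : ints (l.map some) = l := by
  simp [ints, List.filterMap_map]

lemma OrdIso.refl (l : List ℕ) : OrdIso l l := ⟨rfl, fun _ _ _ _ => Iff.rfl⟩

lemma OrdIso.symm {u v : List ℕ} (h : OrdIso u v) : OrdIso v u :=
  ⟨h.1.symm, fun i j hi hj => (h.2 i j (h.1 ▸ hi) (h.1 ▸ hj)).symm⟩

lemma OrdIso.trans {u v w : List ℕ} (h : OrdIso u v) (h' : OrdIso v w) : OrdIso u w :=
  ⟨h.1.trans h'.1, fun i j hi hj => (h.2 i j hi hj).trans (h'.2 i j (h.1 ▸ hi) (h.1 ▸ hj))⟩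

lemma ordIso_of_getElem_lt_iff {u v : List ℕ} (hlen : u.length = v.length)
    (h : ∀ i j (hi : i < u.length) (hj : j < u.length),
      u[i] < u[j] ↔ v[i]'(hlen ▸ hi) < v[j]'(hlen ▸ hj)) : OrdIso u v :=
  ⟨hlen, fun i j hi hj => by
    rw [List.getD_eq_getElem _ _ hi, List.getD_eq_getElem _ _ hj,
      List.getD_eq_getElem _ _ (hlen ▸ hi), List.getD_eq_getElem _ _ (hlen ▸ hj)]
    exact h i j hi hj⟩

lemma ordIso_of_sortedLT {u v : List ℕ} (hu : u.SortedLT) (hv : v.SortedLT)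
    (hlen : u.length = v.length) : OrdIso u v :=
  ordIso_of_getElem_lt_iff hlen fun _ _ _ _ => by
    rw [hu.getElem_lt_getElem_iff, hv.getElem_lt_getElem_iff]

lemma ordIso_map_of_strictMono {f : ℕ → ℕ} (hf : StrictMono f) (l : List ℕ) :
    OrdIso l (l.map f) :=
  ordIso_of_getElem_lt_iff (l.length_map f).symm fun _ _ _ _ => by
    simp only [List.getElem_map, hf.lt_iff_lt]

lemma length_filter_le_mono (l : List ℕ) {x y : ℕ} (hxy : x ≤ y) :
    (l.filter (· ≤ x)).length ≤ (l.filter (· ≤ y)).length :=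
  (l.monotone_filter_right fun a ha => by simp only [decide_eq_true_eq] at ha ⊢; omega).length_le

lemma length_filter_le_lt {l : List ℕ} {x y : ℕ} (hxy : x < y) (hy : y ∈ l) :
    (l.filter (· ≤ x)).length < (l.filter (· ≤ y)).length := by
  have hsub := l.monotone_filter_right (p := (· ≤ x)) (q := (· ≤ y))
    fun a ha => by simp only [decide_eq_true_eq] at ha ⊢; omega
  refine lt_of_le_of_ne hsub.length_le fun heq => ?_
  have hmem : y ∈ l.filter (· ≤ y) := by simp [hy]
  rw [← hsub.eq_of_length heq] at hmem
  simp only [List.mem_filter, decide_eq_true_eq] at hmem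
  omega

lemma ordIso_renumber (l : List ℕ) : OrdIso l (renumber l) :=
  ordIso_of_getElem_lt_iff (l.length_map _).symm fun i j hi hj => by
    simp only [renumber, List.getElem_map]
    refine ⟨fun h => length_filter_le_lt h (List.getElem_mem hj), fun h => ?_⟩
    by_contra hji
    exact absurd h (not_lt.mpr (length_filter_le_mono l (not_lt.mp hji)))

lemma isPermList_renumber {l : List ℕ} (hl : l.Nodup) : IsPermList (renumber l) := by
  have hnd : (renumber l).Nodup := hl.map_on fun x hx y hy hxy => by
    by_contra hne
    rcases Nat.lt_or_gt_of_ne hne with h | h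
    · exact absurd hxy (length_filter_le_lt h hy).ne
    · exact absurd hxy (length_filter_le_lt h hx).ne'
  have hsub : renumber l ⊆ List.range' 1 (renumber l).length := by
    simp only [renumber, List.length_map]
    intro k hk
    obtain ⟨x, hx, rfl⟩ := List.mem_map.mp hk
    have : 0 < (l.filter (· ≤ x)).length := List.length_pos_of_mem (a := x) (by simp [hx])
    have := List.length_filter_le (· ≤ x) l
    rw [List.mem_range'_1]
    omega
  exact (hnd.subperm hsub).perm_of_length_le (by simp)

lemma renumber_map_of_strictMono {f : ℕ → ℕ} (hf : StrictMono f) (l : List ℕ) :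
    renumber (l.map f) = renumber l := by
  simp [renumber, List.filter_map, Function.comp_def, hf.le_iff_le]

lemma IsResult.of_ordIso_left {α β : SPat} {π π' σ : List ℕ} (h : OrdIso π' π)
    (hres : IsResult α β π σ) : IsResult α β π' σ := by
  obtain ⟨ρ₁, ρ₂, a, b, hρ₁, hπ, hrest⟩ := hres
  exact ⟨ρ₁, ρ₂, a, b, hρ₁, OrdIso.trans h hπ, hrest⟩

lemma repl_nil_nil (ρ : SPat) : Repl [] [] ρ ρ := by
  induction ρ with
  | nil => exact .nil
  | cons x ρ ih => exact .keep x ih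

lemma Repl.append_left {a b ρ₁ ρ₂ : SPat} (h : Repl a b ρ₁ ρ₂) (τ : SPat) :
    Repl a b (τ ++ ρ₁) (τ ++ ρ₂) := by
  induction τ with
  | nil => exact h
  | cons x τ ih => exact .keep x ih

lemma repl_triple (A B C D : SPat) (a₁ a₂ a₃ b₁ b₂ b₃ : Option ℕ) :
    Repl [a₁, a₂, a₃] [b₁, b₂, b₃] (A ++ a₁ :: B ++ a₂ :: C ++ a₃ :: D)
      (A ++ b₁ :: B ++ b₂ :: C ++ b₃ :: D) := by
  simpa using ((((repl_nil_nil D).repl a₃ b₃).append_left C |>.repl a₂ b₂).append_left B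
    |>.repl a₁ b₁).append_left A

lemma perm_append_cons_append_cons (P Q R : List ℕ) (y z : ℕ) :
    (P ++ y :: Q ++ z :: R).Perm (y :: (P ++ z :: Q ++ R)) := by
  simpa using List.perm_middle.trans (.cons y (.append_left P List.perm_middle))

lemma isCopy_pat123 {x y z : ℕ} (hxy : x < y) (hyz : y < z) :
    IsCopy [some x, some y, some z] pat123 := by
  refine ⟨rfl, fun i => ?_, ordIso_of_sortedLT ?_ ?_ rfl⟩
  · rcases i with _ | _ | _ | i <;> simp [pat123]
  all_goals simp [List.sortedLT_iff_pairwise, pat123] <;> omega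

lemma isCopy_pat13S {x z : ℕ} (hxz : x < z) : IsCopy [some x, some z, none] pat13S := by
  refine ⟨rfl, fun i => ?_, ordIso_of_sortedLT ?_ ?_ rfl⟩
  · rcases i with _ | _ | _ | i <;> simp [pat13S]
  all_goals simp [List.sortedLT_iff_pairwise, pat13S] <;> omega

lemma isResult_pat123_pat13S {P Q R : List ℕ} {x y z : ℕ}
    (hnd : (P ++ y :: Q ++ z :: R).Nodup) (hpos : ∀ k ∈ P ++ y :: Q ++ z :: R, 0 < k)
    (hx : x ∈ P) (hxy : x < y) (hyz : y < z) :
    IsResult pat123 pat13S (P ++ y :: Q ++ z :: R) (renumber (P ++ z :: Q ++ R)) := by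
  obtain ⟨A, B, rfl⟩ := List.append_of_mem hx
  have hnd' : (A ++ x :: B ++ z :: Q ++ R).Nodup :=
    (List.nodup_cons.mp ((perm_append_cons_append_cons _ Q R y z).nodup_iff.mp hnd)).2
  refine ⟨A.map some ++ some x :: B.map some ++ some y :: Q.map some ++ some z :: R.map some,
    A.map some ++ some x :: B.map some ++ some z :: Q.map some ++ none :: R.map some,
    [some x, some y, some z], [some x, some z, none], ⟨by simpa using hnd, by simpa using hpos⟩,
    by simpa using OrdIso.refl _, isCopy_pat123 hxy hyz,
    ⟨by simpa using (hxy.trans hyz).ne, fun k hk => ?_⟩, isCopy_pat13S (hxy.trans hyz),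
    fun k hk _ => ?_, fun i j k hi hj => ?_, repl_triple .., isPermList_renumber hnd',
    by simpa using ordIso_renumber _⟩
  · obtain rfl | rfl : k = x ∨ k = z := by simpa using hk
    all_goals exact hpos k (by simp)
  · obtain rfl | rfl : k = x ∨ k = z := by simpa using hk
    all_goals simp
  · rcases i with _ | _ | _ | i <;> rcases j with _ | _ | _ | j <;>
      simp [pat123, pat13S] at hi hj ⊢ <;> omega

lemma isResult_pat13S_pat123 {P Q R : List ℕ} {x y z : ℕ}
    (hnd : (P ++ z :: Q ++ R).Nodup) (hpos : ∀ k ∈ P ++ z :: Q ++ R, 0 < k)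
    (hy : y ∉ P ++ z :: Q ++ R) (hx : x ∈ P) (hxy : x < y) (hyz : y < z) :
    IsResult pat13S pat123 (P ++ z :: Q ++ R) (renumber (P ++ y :: Q ++ z :: R)) := by
  obtain ⟨A, B, rfl⟩ := List.append_of_mem hx
  have hnd' : (A ++ x :: B ++ y :: Q ++ z :: R).Nodup :=
    (perm_append_cons_append_cons _ Q R y z).nodup_iff.mpr (List.nodup_cons.mpr ⟨hy, hnd⟩)
  refine ⟨A.map some ++ some x :: B.map some ++ some z :: Q.map some ++ none :: R.map some,
    A.map some ++ some x :: B.map some ++ some y :: Q.map some ++ some z :: R.map some,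
    [some x, some z, none], [some x, some y, some z], ⟨by simpa using hnd, by simpa using hpos⟩,
    by simpa using OrdIso.refl _, isCopy_pat13S (hxy.trans hyz),
    ⟨by simpa using ⟨⟨hxy.ne, (hxy.trans hyz).ne⟩, hyz.ne⟩, fun k hk => ?_⟩, isCopy_pat123 hxy hyz,
    fun k hk hk' => ?_, fun i j k hi hj => ?_, repl_triple .., isPermList_renumber hnd',
    by simpa using ordIso_renumber _⟩
  · obtain rfl | rfl | rfl : k = x ∨ k = y ∨ k = z := by simpa using hk
    · exact hpos k (by simp)
    · omega
    · exact hpos k (by simp)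
  · obtain rfl | rfl | rfl : k = x ∨ k = y ∨ k = z := by simpa using hk
    · simp
    · exact absurd (by simpa using hk') hy
    · simp
  · rcases i with _ | _ | _ | i <;> rcases j with _ | _ | _ | j <;>
      simp [pat123, pat13S] at hi hj ⊢ <;> omega

lemma exists_eq_append_cons_append_cons {α : Type*} {l : List α} {i j : ℕ} (hij : i < j)
    (hj : j < l.length) :
    ∃ P u Q v R, l = P ++ u :: Q ++ v :: R ∧ P.length = i ∧ (P ++ u :: Q).length = j := by
  refine ⟨l.take i, l[i], (l.drop (i + 1)).take (j - i - 1), l[j], l.drop (j + 1), ?_, ?_, ?_⟩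
  · conv_lhs => rw [← List.take_append_drop i l, List.drop_eq_getElem_cons (by omega),
      ← List.take_append_drop (j - i - 1) (l.drop (i + 1)), List.drop_drop,
      List.drop_eq_getElem_cons (by omega)]
    simp [show i + 1 + (j - i - 1) = j by omega]
  · simp only [List.length_take]; omega
  · simp only [List.length_append, List.length_take, List.length_cons, List.length_drop]; omega

lemma set_eraseIdx_append_cons_append_cons {α : Type*} (P Q R : List α) (u v m : α) :
    ((P ++ u :: Q ++ v :: R).set P.length m).eraseIdx (P ++ u :: Q).length = P ++ m :: Q ++ R := by
  simp [List.eraseIdx_append]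

lemma exists_mem_lt_of_not_isLRMin {P T : List ℕ} {u : ℕ} (hnd : (P ++ u :: T).Nodup)
    (h : ¬ IsLRMin (P ++ u :: T) P.length) : ∃ x ∈ P, x < u := by
  simp only [IsLRMin, not_forall, not_lt] at h
  obtain ⟨k, hk, hle⟩ := h
  have hk' : (P ++ u :: T).getD k 0 = P[k] := by simp [List.getElem?_append_left hk, hk]
  have hu' : (P ++ u :: T).getD P.length 0 = u := by simp
  rw [hk', hu'] at hle
  have hu : u ∉ P := fun hu => ((List.nodup_append.mp hnd).2.2 u hu u (by simp)) rfl
  exact ⟨P[k], List.getElem_mem hk, hle.lt_of_ne (ne_of_mem_of_not_mem (List.getElem_mem hk) hu)⟩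

lemma nodup_cons_map_two_mul {l : List ℕ} (hnd : l.Nodup) (hpos : ∀ k ∈ l, 0 < k) {u : ℕ}
    (hu : 0 < u) :
    ((2 * u - 1) :: l.map (2 * ·)).Nodup ∧ ∀ k ∈ (2 * u - 1) :: l.map (2 * ·), 0 < k := by
  refine ⟨List.nodup_cons.mpr ⟨fun h => ?_, hnd.map fun a b hab => by omega⟩, fun k hk => ?_⟩
  · obtain ⟨m, -, hm⟩ := List.mem_map.mp h
    omega
  · rcases List.mem_cons.mp hk with rfl | hk
    · omega
    · obtain ⟨m, hm, rfl⟩ := List.mem_map.mp hk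
      have := hpos m hm
      omega

lemma permEquiv_delete_of_lt {P Q R : List ℕ} {u v x w : ℕ}
    (hnd : (P ++ u :: Q ++ v :: R).Nodup) (hpos : ∀ k ∈ P ++ u :: Q ++ v :: R, 0 < k)
    (hx : x ∈ P) (hxu : x < u) (hw : w ∈ P ++ Q) (hwv : w < v) (hvu : v < u) :
    PermEquiv pat123 pat13S (P ++ u :: Q ++ v :: R) (renumber (P ++ u :: Q ++ R)) := by
  have hmono : StrictMono (2 * · : ℕ → ℕ) := strictMono_mul_left_of_pos two_pos
  -- Doubling every entry makes room for the fresh value `2 * u - 1` just below `2 * u`.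
  obtain ⟨hnd₀', hpos₀'⟩ := nodup_cons_map_two_mul hnd hpos (u := u) (by omega)
  set d : List ℕ → List ℕ := List.map (2 * ·)
  have hL₀ : d (P ++ u :: Q ++ v :: R) = d P ++ 2 * u :: (d Q ++ [2 * v]) ++ d R := by simp [d]
  rw [hL₀] at hnd₀' hpos₀'
  obtain ⟨hfresh, hnd₀⟩ := List.nodup_cons.mp hnd₀'
  have hperm₁ := perm_append_cons_append_cons (d P) (d Q ++ [2 * v]) (d R) (2 * u - 1) (2 * u)
  have hnd₁ := hperm₁.nodup_iff.mpr hnd₀'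
  have hpos₁ := fun k hk => hpos₀' k (hperm₁.subset hk)
  have hsub : (d P ++ (2 * u - 1) :: d Q ++ 2 * u :: d R).Sublist
      (d P ++ (2 * u - 1) :: (d Q ++ [2 * v]) ++ 2 * u :: d R) := by simp
  have step₁ : IsResult pat13S pat123 (d P ++ 2 * u :: (d Q ++ [2 * v]) ++ d R)
      (renumber (d P ++ (2 * u - 1) :: (d Q ++ [2 * v]) ++ 2 * u :: d R)) :=
    isResult_pat13S_pat123 hnd₀ (fun k hk => hpos₀' k (.tail _ hk)) hfresh
      (List.mem_map_of_mem hx) (by omega) (by omega)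
  have step₂ : IsResult pat123 pat13S (d P ++ (2 * u - 1) :: (d Q ++ [2 * v]) ++ 2 * u :: d R)
      (renumber (d P ++ (2 * u - 1) :: d Q ++ 2 * u :: d R)) := by
    have := isResult_pat123_pat13S (P := d P ++ (2 * u - 1) :: d Q) (Q := []) (R := d R)
      (x := 2 * w) (y := 2 * v) (z := 2 * u) (by simpa using hnd₁) (by simpa using hpos₁)
      (by rcases List.mem_append.mp hw with h | h <;> simp [d, h]) (by omega) (by omega)
    simpa using this
  have step₃ : IsResult pat123 pat13S (d P ++ (2 * u - 1) :: d Q ++ 2 * u :: d R)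
      (renumber (d (P ++ u :: Q ++ R))) := by
    simpa [d] using isResult_pat123_pat13S (hsub.nodup hnd₁) (fun k hk => hpos₁ k (hsub.subset hk))
      (List.mem_map_of_mem hx) (by omega) (by omega)
  rw [← renumber_map_of_strictMono hmono]
  exact .head (.inr (step₁.of_ordIso_left (hL₀ ▸ ordIso_map_of_strictMono hmono _)))
    (.head (.inl (step₂.of_ordIso_left (ordIso_renumber _).symm))
      (.single (.inl (step₃.of_ordIso_left (ordIso_renumber _).symm))))

/-- let `π` be a permutation and let its entries at positions
`i < j` both fail to be left-to-right minima. Place the larger of the two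
values at position `i`, delete the entry at position `j`, and renumber; the
result is equivalent to `π` under `123 ↔ 13★`. -/
theorem swap_nonLRmin_equiv (π : List ℕ) (hπ : IsPermList π) (i j : ℕ)
    (hij : i < j) (hj : j < π.length)
    (hi : ¬ IsLRMin π i) (hjm : ¬ IsLRMin π j) :
    PermEquiv pat123 pat13S π
      (renumber ((π.set i (max (π.getD i 0) (π.getD j 0))).eraseIdx j)) := by
  have hnd : π.Nodup := hπ.nodup_iff.mpr List.nodup_range'
  have hpos : ∀ k ∈ π, 0 < k := fun k hk => (List.mem_range'_1.mp (hπ.mem_iff.mp hk)).1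
  obtain ⟨P, u, Q, v, R, rfl, rfl, rfl⟩ := exists_eq_append_cons_append_cons hij hj
  obtain ⟨x, hx, hxu⟩ :=
    exists_mem_lt_of_not_isLRMin (T := Q ++ v :: R) (by simpa using hnd) (by simpa using hi)
  obtain ⟨w, hw, hwv⟩ := exists_mem_lt_of_not_isLRMin hnd hjm
  have hne : u ≠ v := fun h => by simp_all [List.nodup_append]
  have hu : (P ++ u :: Q ++ v :: R).getD P.length 0 = u := by simp
  have hv : (P ++ u :: Q ++ v :: R).getD (P ++ u :: Q).length 0 = v := by simp
  rw [hu, hv, set_eraseIdx_append_cons_append_cons]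
  rcases hne.lt_or_gt with huv | hvu
  · rw [max_eq_right huv.le]
    exact .single (.inl (isResult_pat123_pat13S hnd hpos hx hxu huv))
  · rw [max_eq_left hvu.le]
    have hw' : w ∈ P ++ Q := by
      simp only [List.mem_append, List.mem_cons] at hw ⊢
      rcases hw with hw | rfl | hw
      exacts [.inl hw, absurd hvu (by omega), .inr hw]
    exact permEquiv_delete_of_lt hnd hpos hx hxu hw' hwv hvu
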